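/- Let L be a weighted Laplacian matrix of order n ≥ 1 that is connected, i.e., every vector x with L.mulVec x = 0 is a constant vector (a scalar multiple of the all-ones vector). Let α > 0 and let M = (L + (α/n)·J)⁻¹, where J is the all-ones n×n matrix. Then M satisfies the triangle inequality for proximities: for all indices i, j, k, M i j + M i k − M j k ≤ M i i; moreover, if j = k and i ≠ j, the inequality is strict: 2·(M i j) − M j j < M i i. -/

import Mathlib

/-!
Fix `i, k` and let `v = M (eᵢ - eₖ)`, the difference of the `i`-th and `k`-th columns of `M`.
The rank-one term `c • J` (`c = α / n`) only acts on the constant direction, and `M` maps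
sum-zero vectors to sum-zero vectors, so `L v = eᵢ - eₖ`. By the discrete maximum principle for
the connected Laplacian `L`, `v` is maximal at `i`, strictly above its value at `k ≠ i`. Written
out with the symmetry of `M`, `v j ≤ v i` is the triangle inequality and `v k < v i` its strict
form.
-/

open Matrix Finset

namespace Matrix

variable {ι : Type*} {L : Matrix ι ι ℝ}

theorem mul_sub_nonneg_of_isMax {v : ι → ℝ} {m : ι} (hoff : ∀ i j, i ≠ j → L i j ≤ 0)
    (hm : ∀ l, v l ≤ v m) (l : ι) : 0 ≤ L m l * (v l - v m) := by
  rcases eq_or_ne l m with rfl | hlm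
  · simp
  · exact mul_nonneg_of_nonpos_of_nonpos (hoff m l hlm.symm) (sub_nonpos.2 (hm l))

variable [Fintype ι]

theorem mulVec_apply_eq_sum_mul_sub (hrow : ∀ i, ∑ j, L i j = 0) (v : ι → ℝ) (m : ι) :
    (L *ᵥ v) m = ∑ l, L m l * (v l - v m) := by
  simp only [mul_sub, sum_sub_distrib, ← sum_mul, hrow, zero_mul, sub_zero]
  rfl

theorem one_vecMul_eq_zero_of_isSymm (hsym : L.IsSymm) (hrow : ∀ i, ∑ j, L i j = 0) :
    1 ᵥ* L = 0 := by
  ext l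
  simp only [vecMul, one_dotProduct, ← hrow l, Pi.zero_apply]
  exact sum_congr rfl fun m _ => hsym.apply l m

section MaximumPrinciple

variable {v : ι → ℝ} {m : ι}

theorem mulVec_apply_nonneg_of_isMax (hoff : ∀ i j, i ≠ j → L i j ≤ 0)
    (hrow : ∀ i, ∑ j, L i j = 0) (hm : ∀ l, v l ≤ v m) : 0 ≤ (L *ᵥ v) m := by
  rw [mulVec_apply_eq_sum_mul_sub hrow]
  exact sum_nonneg fun l _ => mul_sub_nonneg_of_isMax hoff hm l

theorem apply_eq_zero_of_isMax (hoff : ∀ i j, i ≠ j → L i j ≤ 0)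
    (hrow : ∀ i, ∑ j, L i j = 0) (hm : ∀ l, v l ≤ v m) (hLv : (L *ᵥ v) m ≤ 0) {l : ι}
    (hl : v l < v m) : L m l = 0 := by
  rw [mulVec_apply_eq_sum_mul_sub hrow] at hLv
  have hsum := hLv.antisymm (sum_nonneg fun l _ => mul_sub_nonneg_of_isMax hoff hm l)
  have hterm := (sum_eq_zero_iff_of_nonneg fun l _ => mul_sub_nonneg_of_isMax hoff hm l).1
    hsum l (mem_univ l)
  exact (mul_eq_zero.1 hterm).resolve_right (sub_ne_zero.2 hl.ne)

theorem eq_univ_of_forall_apply_eq_zero (hsym : L.IsSymm) (hrow : ∀ i, ∑ j, L i j = 0)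
    (hconn : ∀ x : ι → ℝ, L *ᵥ x = 0 → ∃ c : ℝ, x = fun _ => c) {S : Set ι}
    (hS : ∀ m ∈ S, ∀ l ∉ S, L m l = 0) (hne : S.Nonempty) : S = Set.univ := by
  classical
  set x : ι → ℝ := S.indicator 1
  have hx : L *ᵥ x = 0 := by
    ext m
    rw [mulVec_apply_eq_sum_mul_sub hrow]
    refine sum_eq_zero fun l _ => ?_
    by_cases hm : m ∈ S <;> by_cases hl : l ∈ S
    · simp [x, hm, hl]
    · simp [hS m hm l hl]
    · simp [hsym.apply l m, hS l hl m hm]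
    · simp [x, hm, hl]
  obtain ⟨c, hc⟩ := hconn x hx
  obtain ⟨m₀, hm₀⟩ := hne
  refine Set.eq_univ_of_forall fun j => by_contra fun hj => ?_
  have h₀ : x m₀ = 1 := by simp [x, hm₀]
  have hj₀ : x j = 0 := by simp [x, hj]
  rw [hc] at h₀ hj₀
  exact one_ne_zero (h₀.symm.trans hj₀)

theorem le_of_mulVec_apply_nonpos (hsym : L.IsSymm) (hoff : ∀ i j, i ≠ j → L i j ≤ 0)
    (hrow : ∀ i, ∑ j, L i j = 0)
    (hconn : ∀ x : ι → ℝ, L *ᵥ x = 0 → ∃ c : ℝ, x = fun _ => c) {i : ι}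
    (hv : ∀ m, m ≠ i → (L *ᵥ v) m ≤ 0) (j : ι) : v j ≤ v i := by
  have : Nonempty ι := ⟨i⟩
  obtain ⟨m₀, hm₀⟩ := Finite.exists_max v
  by_contra! hij
  have hi : v i < v m₀ := hij.trans_le (hm₀ j)
  have hS := eq_univ_of_forall_apply_eq_zero hsym hrow hconn (S := {m | v m = v m₀})
    (fun m (hm : v m = v m₀) l (hl : v l ≠ v m₀) =>
      apply_eq_zero_of_isMax hoff hrow (fun l => hm ▸ hm₀ l)
        (hv m fun hmi => hi.ne (hmi ▸ hm)) (hm ▸ (hm₀ l).lt_of_ne hl))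
    ⟨m₀, rfl⟩
  exact hi.ne (Set.eq_univ_iff_forall.1 hS i)

theorem lt_of_mulVec_apply_neg (hoff : ∀ i j, i ≠ j → L i j ≤ 0)
    (hrow : ∀ i, ∑ j, L i j = 0) {i k : ι} (hi : ∀ j, v j ≤ v i) (hk : (L *ᵥ v) k < 0) :
    v k < v i :=
  (hi k).lt_of_ne fun hki => hk.not_ge (mulVec_apply_nonneg_of_isMax hoff hrow (hki ▸ hi))

end MaximumPrinciple

section RankOnePerturbation

variable (c : ℝ)

theorem add_smul_ones_mulVec (x : ι → ℝ) :
    (L + c • of fun _ _ => 1) *ᵥ x = L *ᵥ x + fun _ => c * ∑ l, x l := by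
  rw [add_mulVec, smul_mulVec]
  congr 1
  ext m
  simp [mulVec, dotProduct, mul_sum]

theorem one_vecMul_add_smul_ones (hsym : L.IsSymm) (hrow : ∀ i, ∑ j, L i j = 0) :
    1 ᵥ* (L + c • of fun _ _ => 1) = (c * Fintype.card ι) • 1 := by
  rw [vecMul_add, vecMul_smul, one_vecMul_eq_zero_of_isSymm hsym hrow, zero_add]
  ext l
  simp [vecMul, dotProduct]

variable [DecidableEq ι] {c}

theorem isUnit_det_add_smul_ones [Nonempty ι] (hsym : L.IsSymm) (hrow : ∀ i, ∑ j, L i j = 0)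
    (hconn : ∀ x : ι → ℝ, L *ᵥ x = 0 → ∃ c : ℝ, x = fun _ => c) (hc : c ≠ 0) :
    IsUnit (L + c • of fun _ _ => 1).det := by
  set A : Matrix ι ι ℝ := L + c • of fun _ _ => 1
  refine isUnit_iff_ne_zero.2 fun hdet => ?_
  obtain ⟨x, hx0, hx⟩ := exists_mulVec_eq_zero_iff.2 hdet
  have hcard : (Fintype.card ι : ℝ) ≠ 0 := Nat.cast_ne_zero.2 Fintype.card_ne_zero
  have hsum : ∑ l, x l = 0 := by
    have h := dotProduct_mulVec 1 A x
    rw [hx, dotProduct_zero, show 1 ᵥ* A = _ from one_vecMul_add_smul_ones c hsym hrow,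
      smul_dotProduct, one_dotProduct, smul_eq_mul] at h
    exact (mul_eq_zero.1 h.symm).resolve_left (mul_ne_zero hc hcard)
  have hLx : L *ᵥ x = 0 := by
    have h : A *ᵥ x = L *ᵥ x + fun _ => c * ∑ l, x l := add_smul_ones_mulVec c x
    rw [hx, hsum, mul_zero] at h
    exact (add_zero _).symm.trans h.symm
  obtain ⟨d, rfl⟩ := hconn x hLx
  simp only [sum_const, card_univ, nsmul_eq_mul, mul_eq_zero, hcard, false_or] at hsum
  exact hx0 (funext fun _ => hsum)

theorem mulVec_inv_add_smul_ones_mulVec [Nonempty ι] (hsym : L.IsSymm)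
    (hrow : ∀ i, ∑ j, L i j = 0)
    (hconn : ∀ x : ι → ℝ, L *ᵥ x = 0 → ∃ c : ℝ, x = fun _ => c) (hc : c ≠ 0) {u : ι → ℝ}
    (hu : ∑ l, u l = 0) : L *ᵥ ((L + c • of fun _ _ => 1)⁻¹ *ᵥ u) = u := by
  set A : Matrix ι ι ℝ := L + c • of fun _ _ => 1
  set β : ℝ := c * Fintype.card ι
  have hAA : A * A⁻¹ = 1 := mul_nonsing_inv A (isUnit_det_add_smul_ones hsym hrow hconn hc)
  have hβ : β ≠ 0 := mul_ne_zero hc (Nat.cast_ne_zero.2 Fintype.card_ne_zero)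
  have hone : 1 ᵥ* A = β • 1 := one_vecMul_add_smul_ones c hsym hrow
  have hone_inv : 1 ᵥ* A⁻¹ = β⁻¹ • 1 := calc
    1 ᵥ* A⁻¹ = (β⁻¹ • β • 1) ᵥ* A⁻¹ := by rw [inv_smul_smul₀ hβ]
    _ = β⁻¹ • 1 := by rw [smul_vecMul, ← hone, vecMul_vecMul, hAA, vecMul_one]
  have hsum : ∑ l, (A⁻¹ *ᵥ u) l = 0 := by
    rw [← one_dotProduct, dotProduct_mulVec, hone_inv, smul_dotProduct, one_dotProduct, hu,
      smul_zero]
  have hAx : A *ᵥ (A⁻¹ *ᵥ u) = L *ᵥ (A⁻¹ *ᵥ u) + fun _ => c * ∑ l, (A⁻¹ *ᵥ u) l :=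
    add_smul_ones_mulVec c _
  rw [hsum, mul_zero, mulVec_mulVec, hAA, one_mulVec] at hAx
  exact (add_zero _).symm.trans hAx.symm

theorem inv_add_smul_ones_apply_sub_le (hsym : L.IsSymm) (hoff : ∀ i j, i ≠ j → L i j ≤ 0)
    (hrow : ∀ i, ∑ j, L i j = 0)
    (hconn : ∀ x : ι → ℝ, L *ᵥ x = 0 → ∃ c : ℝ, x = fun _ => c) (hc : c ≠ 0) (i k : ι) :
    let M := (L + c • of fun _ _ => 1)⁻¹
    (∀ j, M j i - M j k ≤ M i i - M i k) ∧ (k ≠ i → M k i - M k k < M i i - M i k) := by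
  intro M
  have : Nonempty ι := ⟨i⟩
  set u : ι → ℝ := Pi.single i 1 - Pi.single k 1
  have hv : L *ᵥ (M *ᵥ u) = u :=
    mulVec_inv_add_smul_ones_mulVec hsym hrow hconn hc (by simp [u, sum_sub_distrib])
  have hcol : ∀ m, (M *ᵥ u) m = M m i - M m k := by
    simp [u, mulVec_sub]
  have hmax : ∀ j, (M *ᵥ u) j ≤ (M *ᵥ u) i :=
    le_of_mulVec_apply_nonpos hsym hoff hrow hconn fun m hm => by
      rw [hv]
      simp only [u, Pi.sub_apply, Pi.single_eq_of_ne hm, zero_sub, neg_nonpos]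
      exact (Pi.single_nonneg (α := fun _ : ι => ℝ)).2 zero_le_one m
  refine ⟨fun j => hcol j ▸ hcol i ▸ hmax j, fun hki => ?_⟩
  have hneg : (L *ᵥ (M *ᵥ u)) k < 0 := by
    rw [hv]
    simp [u, hki]
  exact hcol k ▸ hcol i ▸ lt_of_mulVec_apply_neg hoff hrow hmax hneg

end RankOnePerturbation

end Matrix

theorem stmt_18_general {n : ℕ} (L : Matrix (Fin n) (Fin n) ℝ)
    (hsym : L.IsSymm) (hoff : ∀ i j, i ≠ j → L i j ≤ 0)
    (hrow : ∀ i, ∑ j, L i j = 0)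
    (hconn : ∀ x : Fin n → ℝ, L.mulVec x = 0 → ∃ c : ℝ, x = fun _ => c)
    (α : ℝ) (hα : 0 < α) :
    let J : Matrix (Fin n) (Fin n) ℝ := Matrix.of fun _ _ => 1
    let M := (L + (α / (n : ℝ)) • J)⁻¹
    (∀ i j k, M i j + M i k - M j k ≤ M i i) ∧
    (∀ i j, i ≠ j → 2 * M i j - M j j < M i i) := by
  intro J M
  have hM : M.IsSymm := (hsym.add ((IsSymm.ext fun _ _ => rfl : J.IsSymm).smul _)).inv
  have key (i k : Fin n) :
      (∀ j, M j i - M j k ≤ M i i - M i k) ∧ (k ≠ i → M k i - M k k < M i i - M i k) :=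
    inv_add_smul_ones_apply_sub_le hsym hoff hrow hconn
      (div_ne_zero hα.ne' (Nat.cast_ne_zero.2 i.pos.ne')) i k
  refine ⟨fun i j k => ?_, fun i j hij => ?_⟩
  · linarith [(key i k).1 j, hM.apply i j]
  · linarith [(key i j).2 hij.symm, hM.apply i j]

/-- For a connected weighted Laplacian `L` and `α > 0`, the matrix
`M = (L + (α/n) • J)⁻¹` of accessibilities via dense forests satisfies the triangle
inequality for proximities: `M i j + M i k - M j k ≤ M i i`, strictly when `j = k`
and `i ≠ j`. -/
theorem stmt_18 {n : ℕ} (hn : 1 ≤ n) (L : Matrix (Fin n) (Fin n) ℝ)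
    (hsym : L.IsSymm) (hoff : ∀ i j, i ≠ j → L i j ≤ 0)
    (hrow : ∀ i, ∑ j, L i j = 0)
    (hconn : ∀ x : Fin n → ℝ, L.mulVec x = 0 → ∃ c : ℝ, x = fun _ => c)
    (α : ℝ) (hα : 0 < α) :
    let J : Matrix (Fin n) (Fin n) ℝ := Matrix.of fun _ _ => 1
    let M := (L + (α / (n : ℝ)) • J)⁻¹
    (∀ i j k, M i j + M i k - M j k ≤ M i i) ∧
    (∀ i j, i ≠ j → 2 * M i j - M j j < M i i) :=
  stmt_18_general L hsym hoff hrow hconn α hα
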